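/- Fix s>0, N∈ℕ and η∈ℕ^N. With 𝒩_i^+(η)=Σ_{k=i}^{N}η_k and f_i(η)=∏_{j=1}^{η_i}(2s(N+1−i)−j+𝒩_i^+(η))/(2s(N+1)−j+𝒩_i^+(η)), one has the telescoping identity ∏_{i=1}^{N} f_i(η) = (Γ(2s(N+1))/Γ(2s)) · ∏_{i=1}^{N} Γ(2s(N+1−i)+𝒩_i^+(η)) / Γ(2s(N+2−i)+𝒩_i^+(η)). -/

import Mathlib

/-!
Write `M i` for the tail sum `𝒩_i^+(η)`, so that `M i = η i + M (i + 1)` and `M N = 0`. The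
`j`-product defining `f_i` is a ratio of two rising factorials of length `η i`, i.e. of Gamma
quotients `Γ(x + η i) / Γ(x)`. Both quotients then telescope in `i`: the denominators contribute
`Γ(2s(N+1)) / Γ(2s(N+1) + M 0)`, and the numerators differ from the right-hand side only by
`Γ(2s(N+1-i) + M i) / Γ(2s(N-i) + M (i+1))`, which telescopes to `Γ(2s(N+1) + M 0) / Γ(2s)`.
-/

/-- `𝒩_i^+(η) = Σ_{k=i}^{N} η_k` (0-based indexing: the sum of `η k` over `k ≥ i`). -/
def Nplus {N : ℕ} (η : Fin N → ℕ) (i : Fin N) : ℕ :=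
  ∑ k : Fin N, if i ≤ k then η k else 0

/-- `f_i(η) = ∏_{j=1}^{η_i} (2s(N+1−i)−j+𝒩_i^+(η))/(2s(N+1)−j+𝒩_i^+(η))`
(with `i` 1-based in the paper; here `i : Fin N` is 0-based, so `N+1−i` becomes `N−i`). -/
noncomputable def fFact (s : ℝ) {N : ℕ} (η : Fin N → ℕ) (i : Fin N) : ℝ :=
  ∏ j ∈ Finset.Icc 1 (η i),
    (2 * s * ((N : ℝ) - (i : ℕ)) - (j : ℝ) + (Nplus η i : ℝ)) /
      (2 * s * ((N : ℝ) + 1) - (j : ℝ) + (Nplus η i : ℝ))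

open Finset Real

theorem prod_Icc_add_sub_eq_Gamma_div {x : ℝ} (hx : 0 < x) (n : ℕ) :
    ∏ j ∈ Icc 1 n, (x + n - j) = Gamma (x + n) / Gamma x := by
  induction n generalizing x with
  | zero => simp [(Gamma_pos_of_pos hx).ne']
  | succ n ih =>
    rw [prod_Icc_succ_top (by omega)]
    have hshift : ∀ j ∈ Icc 1 n, x + ((n + 1 : ℕ) : ℝ) - j = (x + 1) + n - j := by
      intro j _; push_cast; ring
    rw [prod_congr rfl hshift, ih (by linarith), Gamma_add_one hx.ne', Nat.cast_succ,
      add_sub_cancel_right, add_right_comm, ← add_assoc]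
    field_simp [(Gamma_pos_of_pos hx).ne']

theorem prod_range_div_succ_of_ne_zero {G : Type*} [CommGroupWithZero G] {f : ℕ → G} {n : ℕ}
    (hf : ∀ i ≤ n, f i ≠ 0) : ∏ i ∈ range n, f i / f (i + 1) = f 0 / f n := by
  induction n with
  | zero => simp [hf 0 le_rfl]
  | succ n ih =>
    rw [prod_range_succ, ih fun i hi => hf i (by omega), div_mul_div_cancel₀ (hf n (by omega))]

section TailSum

variable {N : ℕ} (η : Fin N → ℕ)

/-- `Nplus` extended to every `i : ℕ`, so that the shift `i ↦ i + 1` may leave `Fin N`. -/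
def tailSum (i : ℕ) : ℕ := ∑ k : Fin N, if i ≤ (k : ℕ) then η k else 0

theorem Nplus_eq_tailSum (i : Fin N) : Nplus η i = tailSum η i := rfl

theorem tailSum_of_le {i : ℕ} (hi : N ≤ i) : tailSum η i = 0 :=
  sum_eq_zero fun k _ => if_neg (by omega)

theorem tailSum_eq_add_tailSum_succ (i : Fin N) : tailSum η i = η i + tailSum η (i + 1) := by
  unfold tailSum
  rw [← Fintype.sum_ite_eq' i η, ← sum_add_distrib]
  refine sum_congr rfl fun k _ => ?_
  split_ifs <;> grind [Fin.ext_iff]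

end TailSum

theorem fFact_eq_Gamma_div {s : ℝ} (hs : 0 < s) {N : ℕ} (η : Fin N → ℕ) (i : Fin N) :
    fFact s η i =
      Gamma (2 * s * ((N : ℝ) - i) + tailSum η i) /
          Gamma (2 * s * ((N : ℝ) + 1 - (i + 1 : ℕ)) + tailSum η (i + 1)) /
        (Gamma (2 * s * ((N : ℝ) + 1) + tailSum η i) /
          Gamma (2 * s * ((N : ℝ) + 1) + tailSum η (i + 1))) := by
  have hsplit : (tailSum η i : ℝ) = η i + tailSum η (i + 1) := by
    exact_mod_cast tailSum_eq_add_tailSum_succ η i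
  set n := η i
  set m : ℝ := (tailSum η (i + 1) : ℝ)
  have hprod : ∀ c : ℝ, 0 < c + m →
      ∏ j ∈ Icc 1 n, (c - j + (n + m)) = Gamma (c + (n + m)) / Gamma (c + m) := by
    intro c hc
    rw [← add_assoc, add_right_comm, ← prod_Icc_add_sub_eq_Gamma_div hc]
    exact prod_congr rfl fun j _ => by ring
  have hi : (i : ℝ) < N := by exact_mod_cast i.isLt
  have hm : 0 ≤ m := Nat.cast_nonneg _
  unfold fFact
  rw [prod_div_distrib, Nplus_eq_tailSum, hsplit, hprod _ (by nlinarith), hprod _ (by nlinarith)]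
  push_cast
  ring_nf

theorem prod_fFact_eq_general (s : ℝ) (hs : 0 < s) (N : ℕ) (η : Fin N → ℕ) :
    ∏ i : Fin N, fFact s η i
      = (Real.Gamma (2 * s * ((N : ℝ) + 1)) / Real.Gamma (2 * s)) *
        ∏ i : Fin N,
          Real.Gamma (2 * s * ((N : ℝ) - (i : ℕ)) + (Nplus η i : ℝ)) /
            Real.Gamma (2 * s * ((N : ℝ) + 1 - (i : ℕ)) + (Nplus η i : ℝ)) := by
  set g : ℕ → ℝ := fun k => Gamma (2 * s * ((N : ℝ) + 1 - k) + tailSum η k)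
  set h : ℕ → ℝ := fun k => Gamma (2 * s * ((N : ℝ) + 1) + tailSum η k)
  have hg : ∀ k ≤ N, g k ≠ 0 := by
    intro k hk
    have : (k : ℝ) ≤ N := by exact_mod_cast hk
    exact (Gamma_pos_of_pos (add_pos_of_pos_of_nonneg
      (mul_pos (by positivity) (by linarith)) (Nat.cast_nonneg _))).ne'
  have hh : ∀ k, h k ≠ 0 := fun k => (Gamma_pos_of_pos (by positivity)).ne'
  calc ∏ i : Fin N, fFact s η i
      = ∏ i : Fin N, Gamma (2 * s * ((N : ℝ) - (i : ℕ)) + tailSum η i) / g i *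
          (g i / g (i + 1)) / (h i / h (i + 1)) := by
        refine prod_congr rfl fun i _ => ?_
        rw [fFact_eq_Gamma_div hs, div_mul_div_cancel₀ (hg i i.isLt.le)]
    _ = (∏ i : Fin N, Gamma (2 * s * ((N : ℝ) - (i : ℕ)) + tailSum η i) / g i) *
          (g 0 / g N) / (h 0 / h N) := by
        rw [prod_div_distrib, prod_mul_distrib,
          Fin.prod_univ_eq_prod_range (fun k => g k / g (k + 1)),
          Fin.prod_univ_eq_prod_range (fun k => h k / h (k + 1)),
          prod_range_div_succ_of_ne_zero hg, prod_range_div_succ_of_ne_zero fun k _ => hh k]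
    _ = _ := by
        have hgh : g 0 = h 0 := by simp [g, h]
        have hgN : g N = Gamma (2 * s) := by simp [g, tailSum_of_le]
        have hhN : h N = Gamma (2 * s * ((N : ℝ) + 1)) := by simp [h, tailSum_of_le]
        have hΓ : Gamma (2 * s) ≠ 0 := (Gamma_pos_of_pos (by positivity)).ne'
        rw [hgh, hgN, hhN]
        field_simp [hh 0]
        rfl

/-- Telescoping identity:
`∏_{i=1}^{N} f_i(η) = (Γ(2s(N+1))/Γ(2s)) · ∏_{i=1}^{N} Γ(2s(N+1−i)+𝒩_i^+(η))/Γ(2s(N+2−i)+𝒩_i^+(η))`. -/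
theorem prod_fFact_eq (s : ℝ) (hs : 0 < s) (N : ℕ) (hN : 0 < N) (η : Fin N → ℕ) :
    ∏ i : Fin N, fFact s η i
      = (Real.Gamma (2 * s * ((N : ℝ) + 1)) / Real.Gamma (2 * s)) *
        ∏ i : Fin N,
          Real.Gamma (2 * s * ((N : ℝ) - (i : ℕ)) + (Nplus η i : ℝ)) /
            Real.Gamma (2 * s * ((N : ℝ) + 1 - (i : ℕ)) + (Nplus η i : ℝ)) :=
  prod_fFact_eq_general s hs N η
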